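/- For every μ ∈ ℂ, the center of the full toroidal Lie algebra g(μ) = (R⊗ġ) ⊕ K ⊕ D is finite-dimensional, equal to the ℂ-span of the classes of k₀, k₁, …, k_N in K (i.e. of the elements t⁰ k_p, p = 0,…,N). -/

import Mathlib

noncomputable section

/-- Index set `{0, 1, ..., N}` for the variables of the torus. -/
abbrev TorIdx (N : ℕ) := Fin (N + 1)

/-- Laurent polynomials `ℂ[t₀^{±1}, ..., t_N^{±1}]`, realized as finitely supported
functions on the lattice `ℤ^{N+1}` of exponents (Fourier basis). -/
abbrev TorR (N : ℕ) := (TorIdx N → ℤ) →₀ ℂ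

/-- The monomial `t^r = t₀^{r₀} ⋯ t_N^{r_N}`. -/
def tpow {N : ℕ} (r : TorIdx N → ℤ) : TorR N := Finsupp.single r 1

/-- Multiplication of Laurent polynomials. -/
def rmul {N : ℕ} (f g : TorR N) : TorR N :=
  f.sum fun r a => g.sum fun m b => Finsupp.single (r + m) (a * b)

/-- The derivation `d_p = t_p ∂/∂t_p`, acting on monomials by `d_p (t^r) = r_p t^r`. -/
def dOp {N : ℕ} (p : TorIdx N) : TorR N →ₗ[ℂ] TorR N :=
  Finsupp.lsum ℂ fun r => (r p : ℂ) • Finsupp.lsingle r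

/-- The space `Ω_R` of 1-forms on the torus: the free `R`-module with basis `k₀, ..., k_N`,
a 1-form `Σ_p f_p k_p` being recorded as the tuple of coefficients `(f_p)`. -/
abbrev TorOmega (N : ℕ) := TorIdx N → TorR N

/-- The map `d : R → Ω_R`, `d f = Σ_p t_p (∂f/∂t_p) k_p`. -/
def dFull (N : ℕ) : TorR N →ₗ[ℂ] TorOmega N := LinearMap.pi fun p => dOp p

/-- The space `K = Ω_R / d(R)`. -/
abbrev TorK (N : ℕ) := TorOmega N ⧸ LinearMap.range (dFull N)

/-- The canonical projection `Ω_R → K`. -/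
def kcl {N : ℕ} (ω : TorOmega N) : TorK N := Submodule.Quotient.mk ω

/-- The multi-loop space `R ⊗ ġ`, realized as finitely supported functions
`ℤ^{N+1} →₀ ġ`; the element `t^r ⊗ x` is `Finsupp.single r x`. -/
abbrev TorLoop (N : ℕ) (g : Type*) [AddCommGroup g] [Module ℂ g] := (TorIdx N → ℤ) →₀ g

/-- The Lie algebra `D = ⊕_p R d_p` of vector fields on the torus; the vector field
`Σ_p f_p d_p` is recorded as the tuple of coefficients `(f_p)`. -/
abbrev TorD (N : ℕ) := TorIdx N → TorR N

/-- The divergence `Σ_p t_p ∂f_p/∂t_p` of a vector field `Σ_p f_p d_p`. -/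
def divMap (N : ℕ) : TorD N →ₗ[ℂ] TorR N := ∑ p, (dOp p).comp (LinearMap.proj p)

/-- The Kassel bracket on `(R ⊗ ġ) ⊕ K`:
`[f₁ ⊗ g₁, f₂ ⊗ g₂] = f₁f₂ ⊗ [g₁,g₂] + (g₁|g₂)·(class of f₂ d(f₁))`, with `K` central. -/
def kassel {N : ℕ} {g : Type*} [LieRing g] [LieAlgebra ℂ g]
    (B : LinearMap.BilinForm ℂ g) (x y : TorLoop N g × TorK N) :
    TorLoop N g × TorK N :=
  x.1.sum fun r a => y.1.sum fun m b =>
    (Finsupp.single (r + m) ⁅a, b⁆, B a b • kcl fun p => (r p : ℂ) • tpow (r + m))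

/-- The underlying space of the full toroidal Lie algebra `g(μ) = (R ⊗ ġ) ⊕ K ⊕ D`. -/
abbrev TorG (N : ℕ) (g : Type*) [AddCommGroup g] [Module ℂ g] :=
  TorLoop N g × TorK N × TorD N

section Generators

variable {N : ℕ} {g : Type*} [LieRing g] [LieAlgebra ℂ g]

/-- The element `t^r ⊗ x` of `(R ⊗ ġ) ⊕ K ⊕ D`. -/
def G1 (r : TorIdx N → ℤ) (x : g) : TorG N g := (Finsupp.single r x, 0, 0)

/-- The element of `(R ⊗ ġ) ⊕ K ⊕ D` given by the class of a 1-form `ω` in `K`. -/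
def GK (ω : TorOmega N) : TorG N g := (0, kcl ω, 0)

/-- The element `t^r d_a` of `(R ⊗ ġ) ⊕ K ⊕ D`. -/
def G3 (r : TorIdx N → ℤ) (a : TorIdx N) : TorG N g := (0, 0, Pi.single a (tpow r))

end Generators

/-- The defining properties of the bracket of the full toroidal Lie algebra `g(μ)`:
bilinearity, the structure formulas
`[f₁⊗g₁, f₂⊗g₂] = f₁f₂⊗[g₁,g₂] + (g₁|g₂) f₂ d(f₁)`, `K` central in `(R⊗ġ)⊕K`,
`[t^r d_a, t^m⊗g] = m_a t^{r+m}⊗g`,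
`[t^r d_a, t^m k_b] = m_a t^{r+m} k_b + δ_{ab} Σ_p r_p t^{r+m} k_p`,
`[t^r d_a, t^m d_b] = m_a t^{r+m} d_b − r_b t^{r+m} d_a + μ m_a r_b Σ_p m_p t^{r+m} k_p`,
together with the bracket being alternating and satisfying the Jacobi identity. -/
def IsToroidalBracket {N : ℕ} {g : Type*} [LieRing g] [LieAlgebra ℂ g]
    (B : LinearMap.BilinForm ℂ g) (μ : ℂ)
    (br : TorG N g → TorG N g → TorG N g) : Prop :=
  -- bilinearity
  (∀ y : TorG N g, IsLinearMap ℂ fun x => br x y) ∧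
  (∀ x : TorG N g, IsLinearMap ℂ fun y => br x y) ∧
  -- alternating
  (∀ x : TorG N g, br x x = 0) ∧
  -- Jacobi identity
  (∀ x y z : TorG N g, br (br x y) z + br (br y z) x + br (br z x) y = 0) ∧
  -- `[t^r ⊗ x, t^m ⊗ y] = t^{r+m} ⊗ [x,y] + (x|y)·(class of t^m d(t^r))`
  (∀ (r m : TorIdx N → ℤ) (x y : g),
    br (G1 r x) (G1 m y)
      = (Finsupp.single (r + m) ⁅x, y⁆,
          B x y • kcl fun p => (r p : ℂ) • tpow (r + m), 0)) ∧
  -- `K` is central in `(R ⊗ ġ) ⊕ K`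
  (∀ (r : TorIdx N → ℤ) (x : g) (ω : TorOmega N),
    br (G1 r x) (GK ω) = 0 ∧ br (GK ω) (G1 r x) = 0) ∧
  (∀ ω ω' : TorOmega N, br (GK ω) (GK ω') = 0) ∧
  -- `[t^r d_a, t^m ⊗ y] = m_a t^{r+m} ⊗ y`
  (∀ (r : TorIdx N → ℤ) (a : TorIdx N) (m : TorIdx N → ℤ) (y : g),
    br (G3 r a) (G1 m y) = ((m a : ℂ) • Finsupp.single (r + m) y, 0, 0)) ∧
  -- `[t^r d_a, t^m k_b] = m_a t^{r+m} k_b + δ_{ab} Σ_p r_p t^{r+m} k_p`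
  (∀ (r : TorIdx N → ℤ) (a : TorIdx N) (m : TorIdx N → ℤ) (b : TorIdx N),
    br (G3 r a) (GK (Pi.single b (tpow m)))
      = (0, (m a : ℂ) • kcl (Pi.single b (tpow (r + m)))
          + (if a = b then kcl fun p => (r p : ℂ) • tpow (r + m) else 0), 0)) ∧
  -- `[t^r d_a, t^m d_b] = m_a t^{r+m} d_b − r_b t^{r+m} d_a + μ m_a r_b Σ_p m_p t^{r+m} k_p`
  (∀ (r : TorIdx N → ℤ) (a : TorIdx N) (m : TorIdx N → ℤ) (b : TorIdx N),
    br (G3 r a) (G3 m b)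
      = (0, (μ * (m a : ℂ) * (r b : ℂ)) • kcl fun p => (m p : ℂ) • tpow (r + m),
          (m a : ℂ) • (Pi.single b (tpow (r + m)) : TorD N)
            - (r b : ℂ) • (Pi.single a (tpow (r + m)) : TorD N)))


section AuxLemmas

variable {N : ℕ} {g : Type*} [LieRing g] [LieAlgebra ℂ g]

lemma dOp_eq_sum (b : TorIdx N) (f : TorR N) :
    dOp b f = f.sum fun r c => (r b : ℂ) • Finsupp.single r c := by
  rw [dOp, Finsupp.lsum_apply]; rfl

lemma dOp_apply (p : TorIdx N) (f : TorR N) (s : TorIdx N → ℤ) :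
    dOp p f s = (s p : ℂ) * f s := by
  classical
  rw [dOp_eq_sum, Finsupp.sum_apply]
  have key : ∀ r (c : ℂ), ((r p : ℂ) • Finsupp.single r c) s
      = if r = s then (r p : ℂ) * c else 0 := by
    intro r c
    rw [Finsupp.smul_apply, Finsupp.single_apply]
    split <;> simp [smul_eq_mul]
  rw [show (Finsupp.sum f fun r c => ((r p : ℂ) • Finsupp.single r c) s)
      = Finsupp.sum f fun r c => if r = s then (r p : ℂ) * c else 0 from
    Finsupp.sum_congr fun r _ => key r (f r), Finsupp.sum_ite_eq']
  split
  · rfl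
  · rename_i h
    rw [Finsupp.notMem_support_iff.mp h, mul_zero]

lemma dFull_apply' (h : TorR N) (p : TorIdx N) : dFull N h p = dOp p h := rfl

lemma dFull_tpow (r : TorIdx N → ℤ) :
    dFull N (tpow r) = fun q => (r q : ℂ) • tpow r := by
  funext q
  rw [dFull_apply', tpow, dOp, Finsupp.lsum_single]
  rfl

lemma kcl_dexact (r : TorIdx N → ℤ) :
    kcl (fun q => (r q : ℂ) • tpow r) = (0 : TorK N) := by
  rw [← dFull_tpow, kcl]
  exact (Submodule.Quotient.mk_eq_zero _).2 ⟨_, rfl⟩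

lemma kcl_linear : IsLinearMap ℂ (kcl (N := N)) :=
  ⟨fun _ _ => rfl, fun _ _ => rfl⟩

lemma sum_single_piece {N : ℕ} (f : TorR N) (p : TorIdx N) :
    (f.sum fun r c => (Pi.single p (Finsupp.single r c) : TorOmega N)) = Pi.single p f := by
  rw [show (Finsupp.sum f fun r c => (Pi.single p (Finsupp.single r c) : TorOmega N))
      = Pi.single p (f.sum fun r c => Finsupp.single r c) from
    (map_finsuppSum (LinearMap.single ℂ (fun _ : TorIdx N => TorR N) p) _ _).symm]
  rw [Finsupp.sum_single]

/-- decomposition of a tuple of Laurent polynomials into monomial pieces -/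
lemma omega_decomp (ω : TorOmega N) :
    ω = ∑ p, (ω p).sum fun r c => c • (Pi.single p (tpow r) : TorOmega N) := by
  classical
  have h1 : ∀ p : TorIdx N, ((ω p).sum fun r c => c • (Pi.single p (tpow r) : TorOmega N))
      = Pi.single p (ω p) := by
    intro p
    have : ∀ (r : TorIdx N → ℤ) (c : ℂ),
        c • (Pi.single p (tpow r) : TorOmega N) = Pi.single p (Finsupp.single r c) := by
      intro r c
      rw [← Pi.single_smul, tpow, Finsupp.smul_single', mul_one]
    rw [show ((ω p).sum fun r c => c • (Pi.single p (tpow r) : TorOmega N))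
        = (ω p).sum fun r c => (Pi.single p (Finsupp.single r c) : TorOmega N) from
      Finsupp.sum_congr fun r _ => this r (ω p r)]
    rw [sum_single_piece]
  rw [Finset.sum_congr rfl fun p _ => h1 p, Finset.univ_sum_single]

end AuxLemmas


section BrLemmas

variable {N : ℕ} {g : Type*} [LieRing g] [LieAlgebra ℂ g]
variable {B : LinearMap.BilinForm ℂ g} {μ : ℂ} {br : TorG N g → TorG N g → TorG N g}

lemma fst_finsupp_sum {α M : Type*} [Zero M] {β γ : Type*} [AddCommMonoid β] [AddCommMonoid γ]
    (f : α →₀ M) (G : α → M → β × γ) : (f.sum G).1 = f.sum fun a m => (G a m).1 :=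
  Prod.fst_sum

lemma snd_finsupp_sum {α M : Type*} [Zero M] {β γ : Type*} [AddCommMonoid β] [AddCommMonoid γ]
    (f : α →₀ M) (G : α → M → β × γ) : (f.sum G).2 = f.sum fun a m => (G a m).2 :=
  Prod.snd_sum

lemma br_anti (hbr : IsToroidalBracket B μ br) (x y : TorG N g) :
    br y x = - br x y := by
  obtain ⟨h1, h2, halt, -⟩ := hbr
  have h0 := halt (x + y)
  rw [(h1 (x + y)).map_add, (h2 x).map_add, (h2 y).map_add, halt x, halt y,
    zero_add, add_zero] at h0
  exact eq_neg_of_add_eq_zero_right h0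

lemma smul_G3 (r : TorIdx N → ℤ) (a : TorIdx N) (c : ℂ) :
    c • (G3 r a : TorG N g)
      = ((0 : TorLoop N g), (0 : TorK N), (Pi.single a (Finsupp.single r c) : TorD N)) := by
  rw [G3]
  refine Prod.ext ?_ (Prod.ext ?_ ?_)
  · simp
  · simp
  · show c • (Pi.single a (tpow r) : TorD N) = _
    rw [← Pi.single_smul, tpow, Finsupp.smul_single', mul_one]

lemma torG_decomp (f : TorLoop N g) (ω : TorOmega N) (d : TorD N) :
    ((f, kcl ω, d) : TorG N g)
      = (f.sum fun r v => G1 r v) + GK ω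
        + ∑ a, (d a).sum fun r c => c • (G3 r a : TorG N g) := by
  classical
  refine Prod.ext ?_ (Prod.ext ?_ ?_)
  · show f = _
    simp only [Prod.fst_add, fst_finsupp_sum, Prod.fst_sum, smul_G3, G1, GK]
    simp [Finsupp.sum_single]
  · show kcl ω = _
    simp only [Prod.snd_add, Prod.fst_add, snd_finsupp_sum, fst_finsupp_sum,
      Prod.snd_sum, Prod.fst_sum, smul_G3, G1, GK]
    simp
  · show d = _
    simp only [Prod.snd_add, snd_finsupp_sum, Prod.snd_sum, smul_G3, G1, GK]
    simp only [Finsupp.sum_fun_zero, zero_add, add_zero]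
    -- goal should now be d = ∑ a, (d a).sum fun r c => Pi.single a (Finsupp.single r c)
    rw [Finset.sum_congr rfl fun a (_ : a ∈ Finset.univ) => sum_single_piece (d a) a,
      Finset.univ_sum_single]

lemma br_expand_left (hbr : IsToroidalBracket B μ br) (y : TorG N g)
    (f : TorLoop N g) (ω : TorOmega N) (d : TorD N) :
    br ((f, kcl ω, d) : TorG N g) y
      = (f.sum fun r v => br (G1 r v) y) + br (GK ω) y
        + ∑ a, (d a).sum fun r c => c • br (G3 r a) y := by
  have h1 := hbr.1
  set L : TorG N g →ₗ[ℂ] TorG N g := IsLinearMap.mk' _ (h1 y) with hL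
  have hLz : ∀ z, br z y = L z := fun z => rfl
  rw [hLz, torG_decomp, map_add, map_add, map_finsuppSum, map_sum]
  simp only [map_finsuppSum, map_smul]
  rfl

lemma br_expand_right (hbr : IsToroidalBracket B μ br) (x : TorG N g)
    (f : TorLoop N g) (ω : TorOmega N) (d : TorD N) :
    br x ((f, kcl ω, d) : TorG N g)
      = (f.sum fun r v => br x (G1 r v)) + br x (GK ω)
        + ∑ a, (d a).sum fun r c => c • br x (G3 r a) := by
  have h2 := hbr.2.1
  set L : TorG N g →ₗ[ℂ] TorG N g := IsLinearMap.mk' _ (h2 x) with hL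
  have hLz : ∀ z, br x z = L z := fun z => rfl
  rw [hLz, torG_decomp, map_add, map_add, map_finsuppSum, map_sum]
  simp only [map_finsuppSum, map_smul]
  rfl

lemma br_G3_GK_zero (hbr : IsToroidalBracket B μ br) (r : TorIdx N → ℤ) (a : TorIdx N)
    (p : TorIdx N) :
    br (G3 r a : TorG N g) (GK (Pi.single p (tpow (0 : TorIdx N → ℤ)))) = 0 := by
  have h3K := hbr.2.2.2.2.2.2.2.2.1
  rw [h3K r a 0 p]
  have e1 : ((0 : TorIdx N → ℤ) a : ℂ) = 0 := by norm_num
  have e2 : r + (0 : TorIdx N → ℤ) = r := add_zero r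
  rw [e1, e2, zero_smul, zero_add]
  split
  · rw [kcl_dexact]; rfl
  · rfl

lemma gen_central (hbr : IsToroidalBracket B μ br) (p : TorIdx N) (y : TorG N g) :
    br (GK (Pi.single p (tpow (0 : TorIdx N → ℤ))) : TorG N g) y = 0 := by
  obtain ⟨ω', hω'⟩ := Submodule.Quotient.mk_surjective (LinearMap.range (dFull N)) y.2.1
  have hy : y = ((y.1, kcl ω', y.2.2) : TorG N g) := by
    rw [kcl, hω']
  rw [hy, br_expand_right hbr]
  have t1 : (y.1.sum fun r v =>
      br (GK (Pi.single p (tpow (0 : TorIdx N → ℤ))) : TorG N g) (G1 r v)) = 0 := by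
    rw [Finsupp.sum]
    exact Finset.sum_eq_zero fun r _ => (hbr.2.2.2.2.2.1 r (y.1 r) _).2
  have t2 : br (GK (Pi.single p (tpow (0 : TorIdx N → ℤ))) : TorG N g) (GK ω') = 0 :=
    hbr.2.2.2.2.2.2.1 _ ω'
  have t3 : ∀ (a : TorIdx N) (r : TorIdx N → ℤ),
      br (GK (Pi.single p (tpow (0 : TorIdx N → ℤ))) : TorG N g) (G3 r a) = 0 := by
    intro a r
    rw [br_anti hbr, br_G3_GK_zero hbr, neg_zero]
  rw [t1, t2]
  simp only [t3, smul_zero, Finsupp.sum_fun_zero, Finset.sum_const_zero, add_zero, zero_add]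

lemma eval_shift {M V : Type*} [Zero M] [AddCommMonoid V]
    (f : (TorIdx N → ℤ) →₀ M) (m r₀ : TorIdx N → ℤ) (φ : (TorIdx N → ℤ) → M → V) :
    (f.sum fun r v => (Finsupp.single (r + m) (φ r v) : (TorIdx N → ℤ) →₀ V)) (r₀ + m)
      = if r₀ ∈ f.support then φ r₀ (f r₀) else 0 := by
  classical
  rw [Finsupp.sum_apply]
  rw [show (f.sum fun r v => (Finsupp.single (r + m) (φ r v)) (r₀ + m))
      = f.sum fun r v => if r = r₀ then φ r v else 0 from
    Finsupp.sum_congr fun r _ => by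
      rw [Finsupp.single_apply]
      simp only [add_left_inj]]
  exact Finsupp.sum_ite_eq' f r₀ φ

end BrLemmas


/-- For every `μ ∈ ℂ`, the center of the full toroidal Lie algebra
`g(μ) = (R⊗ġ) ⊕ K ⊕ D` is the (finite-dimensional) span of the classes of
`k₀, k₁, …, k_N` in `K`, i.e. of the elements `t⁰ k_p`, `p = 0, …, N`. -/
theorem statement8 (N : ℕ) (hN : 1 ≤ N) (g : Type*) [LieRing g] [LieAlgebra ℂ g]
    [FiniteDimensional ℂ g] [LieAlgebra.IsSimple ℂ g]
    (B : LinearMap.BilinForm ℂ g)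
    (hsymm : ∀ x y : g, B x y = B y x)
    (hinv : ∀ x y z : g, B ⁅x, y⁆ z = B x ⁅y, z⁆)
    (hnd : ∀ x : g, x ≠ 0 → ∃ y : g, B x y ≠ 0)
    (μ : ℂ) (br : TorG N g → TorG N g → TorG N g)
    (hbr : IsToroidalBracket B μ br) :
    {x : TorG N g | ∀ y : TorG N g, br x y = 0}
      = (Submodule.span ℂ
          (Set.range fun p : TorIdx N =>
            (GK (Pi.single p (tpow (0 : TorIdx N → ℤ))) : TorG N g)) : Set (TorG N g)) := by
  classical
  obtain ⟨hlin1, hlin2, halt, hjac, h11, h1K, hKK, h31, h3K, h33⟩ := id hbr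
  ext z
  simp only [Set.mem_setOf_eq, SetLike.mem_coe]
  constructor
  · intro hz
    obtain ⟨ω, hω⟩ := Submodule.Quotient.mk_surjective (LinearMap.range (dFull N)) z.2.1
    have hzeq : z = ((z.1, kcl ω, z.2.2) : TorG N g) := by
      refine Prod.ext rfl (Prod.ext ?_ rfl)
      rw [kcl, hω]
    -- Step A: the key scalar equation
    have hg1 : ∀ (m : TorIdx N → ℤ) (w : g) (r₀ : TorIdx N → ℤ),
        ⁅z.1 r₀, w⁆ + (∑ a, z.2.2 a r₀ * (m a : ℂ)) • w = 0 := by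
      intro m w r₀
      have h : br z (G1 m w) = 0 := hz (G1 m w)
      rw [hzeq, br_expand_left hbr] at h
      simp only [h11, h31, (h1K m w ω).2] at h
      have hfst := congrArg Prod.fst h
      simp only [Prod.fst_add, fst_finsupp_sum, Prod.smul_fst, Prod.fst_sum,
        Prod.fst_zero] at hfst
      have hev := congrArg (fun F : TorLoop N g => F (r₀ + m)) hfst
      simp only [Finsupp.add_apply, Finsupp.coe_zero, Pi.zero_apply,
        Finsupp.finset_sum_apply] at hev
      have t1 : (z.1.sum fun r v => (Finsupp.single (r + m) ⁅v, w⁆ : TorLoop N g)) (r₀ + m)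
          = ⁅z.1 r₀, w⁆ := by
        rw [eval_shift]
        split
        · rfl
        · rename_i hmem
          rw [Finsupp.notMem_support_iff.mp hmem, zero_lie]
      have t2 : ∀ a : TorIdx N,
          ((z.2.2 a).sum fun r c =>
            c • ((m a : ℂ) • (Finsupp.single (r + m) w : TorLoop N g))) (r₀ + m)
          = (z.2.2 a r₀ * (m a : ℂ)) • w := by
        intro a
        rw [show ((z.2.2 a).sum fun r c =>
              c • ((m a : ℂ) • (Finsupp.single (r + m) w : TorLoop N g)))
            = (z.2.2 a).sum fun r c =>
              (Finsupp.single (r + m) ((c * (m a : ℂ)) • w) : TorLoop N g) from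
          Finsupp.sum_congr fun r _ => by
            rw [smul_smul, Finsupp.smul_single]]
        rw [eval_shift]
        split
        · rfl
        · rename_i hmem
          rw [Finsupp.notMem_support_iff.mp hmem, zero_mul, zero_smul]
      rw [t1, Finset.sum_congr rfl fun a (_ : a ∈ Finset.univ) => t2 a] at hev
      rw [← Finset.sum_smul] at hev
      simpa using hev
    -- f-part and d-part vanish
    have hcent : ∀ r₀, z.1 r₀ = 0 := by
      intro r₀
      have hv : ∀ w : g, ⁅z.1 r₀, w⁆ = 0 := by
        intro w
        have h := hg1 0 w r₀
        simpa using h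
      have hmem : z.1 r₀ ∈ LieAlgebra.center ℂ g :=
        fun x => by rw [← lie_skew, hv, neg_zero]
      rw [LieAlgebra.center_eq_bot ℂ g] at hmem
      exact hmem
    have hW : ∃ w : g, w ≠ 0 := by
      have hna := LieAlgebra.IsSimple.non_abelian (R := ℂ) (L := g)
      by_contra hco; push_neg at hco
      exact hna ⟨fun x y => by rw [hco x, zero_lie]⟩
    have hD : ∀ (b : TorIdx N) (r₀ : TorIdx N → ℤ), z.2.2 b r₀ = 0 := by
      intro b r₀
      obtain ⟨w, hw⟩ := hW
      have h := hg1 (Pi.single b 1) w r₀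
      rw [hcent r₀, zero_lie, zero_add] at h
      have hterm : ∀ a : TorIdx N, z.2.2 a r₀ * (((Pi.single b 1 : TorIdx N → ℤ)) a : ℂ)
          = if a = b then z.2.2 a r₀ else 0 := by
        intro a
        rw [Pi.single_apply]
        split
        · rw [Int.cast_one, mul_one]
        · rw [Int.cast_zero, mul_zero]
      have hsum : (∑ a, z.2.2 a r₀ * (((Pi.single b 1 : TorIdx N → ℤ)) a : ℂ))
          = z.2.2 b r₀ := by
        rw [Finset.sum_congr rfl fun a (_ : a ∈ Finset.univ) => hterm a,
          Finset.sum_ite_eq' Finset.univ b, if_pos (Finset.mem_univ b)]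
      rw [hsum] at h
      rcases smul_eq_zero.mp h with h' | h'
      · exact h'
      · exact absurd h' hw
    have hz1 : z.1 = 0 := Finsupp.ext fun r₀ => hcent r₀
    have hz3 : z.2.2 = 0 := funext fun b => Finsupp.ext fun r₀ => hD b r₀
    -- Step B : analysis of the K part
    have hKcond : ∀ b : TorIdx N, ∃ hb : TorR N, ∀ p, dOp p hb = dOp b (ω p) := by
      intro b
      have h : br z (G3 0 b) = 0 := hz (G3 0 b)
      rw [hzeq, br_expand_left hbr] at h
      rw [hz1, hz3] at h
      simp only [Finsupp.sum_zero_index, Pi.zero_apply, Finset.sum_const_zero,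
        zero_add, add_zero] at h
      have h3 : br (G3 0 b : TorG N g) (GK ω) = 0 := by
        rw [br_anti hbr (GK ω) (G3 0 b), h, neg_zero]
      set L : TorG N g →ₗ[ℂ] TorG N g := IsLinearMap.mk' _ (hlin2 (G3 0 b)) with hLdef
      set GKlin : TorOmega N →ₗ[ℂ] TorG N g :=
        LinearMap.prod 0 (LinearMap.prod (Submodule.mkQ (LinearMap.range (dFull N))) 0)
        with hGKdef
      set LG : TorOmega N →ₗ[ℂ] TorG N g := L.comp GKlin with hLGdef
      have h5 : ∀ (p : TorIdx N) (r : TorIdx N → ℤ),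
          br (G3 0 b : TorG N g) (GK (Pi.single p (tpow r)))
            = ((0 : TorLoop N g), (r b : ℂ) • kcl (Pi.single p (tpow r)), (0 : TorD N)) := by
        intro p r
        rw [h3K 0 b r p]
        have e0 : (0 : TorIdx N → ℤ) + r = r := zero_add r
        rw [e0]
        have ez : (kcl fun q => (((0 : TorIdx N → ℤ)) q : ℂ) • tpow r) = (0 : TorK N) := by
          rw [show (fun q => (((0 : TorIdx N → ℤ)) q : ℂ) • tpow r) = (0 : TorOmega N) from
            funext fun q => by simp]
          rw [kcl]
          exact Submodule.Quotient.mk_zero _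
        rw [ez, ite_self, add_zero]
      have hsum0 : (∑ p, (ω p).sum fun r c =>
          c • br (G3 0 b : TorG N g) (GK (Pi.single p (tpow r)))) = 0 := by
        have e : ∀ p : TorIdx N, ((ω p).sum fun r c => c • LG (Pi.single p (tpow r)))
            = LG ((ω p).sum fun r c => c • (Pi.single p (tpow r) : TorOmega N)) := by
          intro p
          rw [show ((ω p).sum fun r c => c • LG (Pi.single p (tpow r)))
              = (ω p).sum fun r c => LG (c • (Pi.single p (tpow r) : TorOmega N)) from
            Finsupp.sum_congr fun r _ => (map_smul LG _ _).symm]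
          exact (map_finsuppSum LG _ _).symm
        calc (∑ p, (ω p).sum fun r c =>
              c • br (G3 0 b : TorG N g) (GK (Pi.single p (tpow r))))
            = ∑ p, LG ((ω p).sum fun r c => c • (Pi.single p (tpow r) : TorOmega N)) :=
              Finset.sum_congr rfl fun p _ => e p
          _ = LG (∑ p, (ω p).sum fun r c => c • (Pi.single p (tpow r) : TorOmega N)) :=
              (map_sum LG _ _).symm
          _ = LG ω := by rw [← omega_decomp]
          _ = 0 := h3
      simp only [h5] at hsum0
      have hK := congrArg (fun t : TorG N g => t.2.1) hsum0
      simp only [Prod.snd_sum, Prod.fst_sum, snd_finsupp_sum, fst_finsupp_sum,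
        Prod.smul_snd, Prod.smul_fst, Prod.snd_zero, Prod.fst_zero] at hK
      set η : TorOmega N := ∑ p, (ω p).sum fun r c =>
        (c * (r b : ℂ)) • (Pi.single p (tpow r) : TorOmega N) with hηdef
      have hkclη : kcl η = 0 := by
        have e2 : ∀ p : TorIdx N,
            ((ω p).sum fun r c => c • ((r b : ℂ) • kcl (Pi.single p (tpow r))))
            = Submodule.mkQ (LinearMap.range (dFull N))
                ((ω p).sum fun r c => (c * (r b : ℂ)) • (Pi.single p (tpow r) : TorOmega N)) := by
          intro p
          rw [map_finsuppSum]
          exact Finsupp.sum_congr fun r _ => by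
            rw [map_smul, smul_smul]
            rfl
        calc kcl η
            = ∑ p, Submodule.mkQ (LinearMap.range (dFull N))
                ((ω p).sum fun r c => (c * (r b : ℂ)) • (Pi.single p (tpow r) : TorOmega N)) := by
              show Submodule.mkQ (LinearMap.range (dFull N)) η = _
              rw [hηdef]
              exact map_sum (Submodule.mkQ (LinearMap.range (dFull N))) _ Finset.univ
          _ = ∑ p, (ω p).sum fun r c => c • ((r b : ℂ) • kcl (Pi.single p (tpow r))) :=
              Finset.sum_congr rfl fun p _ => (e2 p).symm
          _ = 0 := hK
      obtain ⟨hb, hhb⟩ := (Submodule.Quotient.mk_eq_zero _).mp hkclη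
      have hηeq : η = fun p => dOp b (ω p) := by
        rw [hηdef]
        have e3 : ∀ p : TorIdx N,
            ((ω p).sum fun r c => (c * (r b : ℂ)) • (Pi.single p (tpow r) : TorOmega N))
            = Pi.single p (dOp b (ω p)) := by
          intro p
          have e4 : ∀ (r : TorIdx N → ℤ) (c : ℂ),
              (c * (r b : ℂ)) • (Pi.single p (tpow r) : TorOmega N)
              = Pi.single p ((r b : ℂ) • Finsupp.single r c) := by
            intro r c
            rw [← Pi.single_smul]
            refine congrArg _ ?_
            rw [tpow, Finsupp.smul_single', Finsupp.smul_single, smul_eq_mul, mul_one,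
              mul_comm]
          rw [show ((ω p).sum fun r c => (c * (r b : ℂ)) • (Pi.single p (tpow r) : TorOmega N))
              = (ω p).sum fun r c => (Pi.single p ((r b : ℂ) • Finsupp.single r c) : TorOmega N)
            from Finsupp.sum_congr fun r _ => e4 r (ω p r)]
          rw [show ((ω p).sum fun r c =>
                (Pi.single p ((r b : ℂ) • Finsupp.single r c) : TorOmega N))
              = Pi.single p ((ω p).sum fun r c => (r b : ℂ) • Finsupp.single r c) from
            (map_finsuppSum (LinearMap.single ℂ (fun _ : TorIdx N => TorR N) p) _ _).symm]
          rw [← dOp_eq_sum]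
        rw [Finset.sum_congr rfl fun p _ => e3 p, Finset.univ_sum_single]
      refine ⟨hb, fun p => ?_⟩
      have := congrFun hhb p
      rw [dFull_apply'] at this
      rw [this, hηeq]
    -- Step C : construct the primitive and conclude membership
    have HB : ∀ b : TorIdx N, ∃ hb : TorR N, ∀ (p : TorIdx N) (r : TorIdx N → ℤ),
        (r p : ℂ) * hb r = (r b : ℂ) * ω p r := by
      intro b
      obtain ⟨hb, hhb⟩ := hKcond b
      refine ⟨hb, fun p r => ?_⟩
      have := DFunLike.congr_fun (hhb p) r
      rwa [dOp_apply, dOp_apply] at this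
    set Hb : TorIdx N → TorR N := fun b => Classical.choose (HB b) with hHbdef
    have hHB : ∀ (b p : TorIdx N) (r : TorIdx N → ℤ),
        (r p : ℂ) * Hb b r = (r b : ℂ) * ω p r := fun b => Classical.choose_spec (HB b)
    have hex : ∀ r : TorIdx N → ℤ, r ≠ 0 → ∃ b, r b ≠ 0 := by
      intro r hr
      by_contra hco
      push_neg at hco
      exact hr (funext fun b => hco b)
    set pick : (TorIdx N → ℤ) → TorIdx N := fun r =>
      if hr : r = 0 then 0 else (hex r hr).choose with hpickdef
    have hpick : ∀ r : TorIdx N → ℤ, r ≠ 0 → r (pick r) ≠ 0 := by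
      intro r hr
      simp only [hpickdef, dif_neg hr]
      exact (hex r hr).choose_spec
    set hcf : (TorIdx N → ℤ) → ℂ := fun r =>
      if r = 0 then 0 else Hb (pick r) r / ((r (pick r) : ℂ)) with hcfdef
    have hsupp : ∀ r : TorIdx N → ℤ,
        hcf r ≠ 0 → r ∈ Finset.univ.biUnion fun b => (Hb b).support := by
      intro r hne
      simp only [hcfdef] at hne
      by_cases hr : r = 0
      · rw [if_pos hr] at hne
        exact absurd rfl hne
      · rw [if_neg hr] at hne
        have hnum : Hb (pick r) r ≠ 0 := fun h0 => hne (by rw [h0, zero_div])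
        exact Finset.mem_biUnion.mpr
          ⟨pick r, Finset.mem_univ _, Finsupp.mem_support_iff.mpr hnum⟩
    set hc : TorR N := Finsupp.onFinset _ hcf hsupp with hcdef
    have hcapp : ∀ r : TorIdx N → ℤ, hc r = hcf r := fun r => rfl
    have homega : ∀ p, ω p = dOp p hc + Finsupp.single (0 : TorIdx N → ℤ) (ω p 0) := by
      intro p
      ext r
      rw [Finsupp.add_apply, dOp_apply, hcapp]
      by_cases hr : r = 0
      · subst hr
        simp
      · have hb0 : ((r (pick r) : ℂ)) ≠ 0 := by
          rw [Int.cast_ne_zero]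
          exact hpick r hr
        have hval : hcf r = Hb (pick r) r / (r (pick r) : ℂ) := by
          simp only [hcfdef]
          rw [if_neg hr]
        rw [hval, Finsupp.single_apply, if_neg (fun h => hr h.symm), add_zero]
        have hkey := hHB (pick r) p r
        rw [← mul_div_assoc, hkey, mul_div_cancel_left₀ _ hb0]
    have homega' : ω = dFull N hc + fun p => Finsupp.single (0 : TorIdx N → ℤ) (ω p 0) :=
      funext fun p => by
        rw [Pi.add_apply, dFull_apply']
        exact homega p
    have hkclω : kcl ω = ∑ p, (ω p 0) • kcl (Pi.single p (tpow (0 : TorIdx N → ℤ))) := by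
      have e1 : kcl ω = kcl (fun p => Finsupp.single (0 : TorIdx N → ℤ) (ω p 0)) := by
        conv_lhs => rw [homega']
        show Submodule.mkQ (LinearMap.range (dFull N)) _ = _
        rw [map_add]
        rw [show Submodule.mkQ (LinearMap.range (dFull N)) (dFull N hc) = 0 from
          (Submodule.Quotient.mk_eq_zero _).mpr ⟨hc, rfl⟩, zero_add]
        rfl
      rw [e1]
      have e2 : (fun p => Finsupp.single (0 : TorIdx N → ℤ) (ω p 0))
          = ∑ p, (ω p 0) • (Pi.single p (tpow (0 : TorIdx N → ℤ)) : TorOmega N) := by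
        rw [show (∑ p, (ω p 0) • (Pi.single p (tpow (0 : TorIdx N → ℤ)) : TorOmega N))
            = ∑ p, (Pi.single p (Finsupp.single (0 : TorIdx N → ℤ) (ω p 0)) : TorOmega N) from
          Finset.sum_congr rfl fun p _ => by
            rw [← Pi.single_smul, tpow, Finsupp.smul_single', mul_one]]
        exact (Finset.univ_sum_single _).symm
      rw [e2]
      show Submodule.mkQ (LinearMap.range (dFull N)) _ = _
      rw [map_sum]
      exact Finset.sum_congr rfl fun p _ => by
        rw [map_smul]
        rfl
    have hzfinal : z = ∑ p, (ω p 0) •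
        (GK (Pi.single p (tpow (0 : TorIdx N → ℤ))) : TorG N g) := by
      refine Prod.ext ?_ (Prod.ext ?_ ?_)
      · rw [hz1, Prod.fst_sum]
        symm
        refine Finset.sum_eq_zero fun p _ => ?_
        rw [Prod.smul_fst]
        show (ω p 0) • (0 : TorLoop N g) = 0
        rw [smul_zero]
      · calc z.2.1 = kcl ω := hω.symm
          _ = ∑ p, (ω p 0) • kcl (Pi.single p (tpow (0 : TorIdx N → ℤ))) := hkclω
          _ = (∑ p, (ω p 0) •
              (GK (Pi.single p (tpow (0 : TorIdx N → ℤ))) : TorG N g)).2.1 := by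
            simp only [Prod.snd_sum, Prod.fst_sum, Prod.smul_snd, Prod.smul_fst]
            rfl
      · rw [hz3]
        show (0 : TorD N) = _
        symm
        rw [show ((∑ p, (ω p 0) •
            (GK (Pi.single p (tpow (0 : TorIdx N → ℤ))) : TorG N g)).2.2 : TorD N)
            = ∑ p, ((ω p 0) •
            (GK (Pi.single p (tpow (0 : TorIdx N → ℤ))) : TorG N g)).2.2 from by
          simp only [Prod.snd_sum]]
        refine Finset.sum_eq_zero fun p _ => ?_
        rw [Prod.smul_snd, Prod.smul_snd]
        show (ω p 0) • (0 : TorD N) = 0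
        rw [smul_zero]
    rw [hzfinal]
    exact Submodule.sum_mem _ fun p _ =>
      Submodule.smul_mem _ _ (Submodule.subset_span ⟨p, rfl⟩)
  · intro hz y
    induction hz using Submodule.span_induction with
    | mem x hx =>
        obtain ⟨p, rfl⟩ := hx
        exact gen_central hbr p y
    | zero => exact (hlin1 y).map_zero
    | add a b _ _ ha hb => rw [(hlin1 y).map_add, ha, hb, add_zero]
    | smul c x _ hx => rw [(hlin1 y).map_smul, hx, smul_zero]
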